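/- If all entries of P are nonnegative, then F(0) = 0, F(1) = 1, F is nondecreasing and continuous, hence F is a continuous probability distribution function on [0,1]. -/

import Mathlib

open Finset Filter Topology MeasureTheory

noncomputable section

/-- `rowSum p n k = Σ_{i<k} p_{i,n}` (the numbers `β_{k,n}`). -/
def rowSum (p : ℕ → ℕ → ℝ) (n k : ℕ) : ℝ := ∑ i ∈ Finset.range k, p n i

/-- Index flip at even positions: `tw m f n i = f n i` for odd `n`, `f n (m n - i)` for even `n`. -/
def tw (m : ℕ → ℕ) (f : ℕ → ℕ → ℝ) (n i : ℕ) : ℝ :=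
  if Odd n then f n i else f n (m n - i)

/-- Tail value of the (nega-)expansion determined by `f` from position `k+1` on. -/
def negaShift (m : ℕ → ℕ) (f : ℕ → ℕ → ℝ) (d : ℕ → ℕ) (k : ℕ) : ℝ :=
  ∑' j : ℕ, tw m (rowSum f) (k + j + 1) (d (k + j + 1)) *
    ∏ t ∈ Finset.Icc (k + 1) (k + j), tw m f t (d t)

/-- The nega-expansion value: `negaVal m f d = β̃_{d₁,1} + Σ_{k≥2} β̃_{d_k,k} Π_{j<k} f̃_{d_j,j}`. -/
def negaVal (m : ℕ → ℕ) (f : ℕ → ℕ → ℝ) (d : ℕ → ℕ) : ℝ := negaShift m f d 0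

/-- A digit sequence for the alphabet sizes `m`. -/
def ValidDigits (m : ℕ → ℕ) (d : ℕ → ℕ) : Prop := ∀ n, d n ≤ m n

/-!
Reversing the digits at even positions (`twistDigits`) turns a nega-expansion into an ordinary
expansion `tailValue`, so `G` sends the `q`-value of a digit sequence to its `p`-value. For
nonnegative rows the value is monotone in the lexicographic order of the digits. Since the rows of
`q` are positive, two digit sequences with the same `q`-value agree or are adjacent,
`(c, a, m, m, …)` and `(c, a + 1, 0, 0, …)`, and adjacent sequences have the same `p`-value because
the cylinder products of `p` vanish; hence `G` is nondecreasing. The greedy algorithm realises every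
point of `[0, 1]` as a `p`-value, so `G` is a monotone surjection of `[0, 1]` onto itself, which
forces `G 0 = 0`, `G 1 = 1` and continuity.
-/

def twistDigits (m d : ℕ → ℕ) (n : ℕ) : ℕ := if Odd n then d n else m n - d n

lemma twistDigits_valid {m d : ℕ → ℕ} (hd : ValidDigits m d) : ValidDigits m (twistDigits m d) :=
  fun n => by have := hd n; unfold twistDigits; split_ifs <;> omega

lemma twistDigits_twistDigits {m d : ℕ → ℕ} (hd : ValidDigits m d) :
    twistDigits m (twistDigits m d) = d :=
  funext fun n => by have := hd n; unfold twistDigits; split_ifs <;> omega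

lemma tw_apply (m d : ℕ → ℕ) (g : ℕ → ℕ → ℝ) (n : ℕ) :
    tw m g n (d n) = g n (twistDigits m d n) := by
  unfold tw twistDigits; split_ifs <;> rfl

def tailTerm (f : ℕ → ℕ → ℝ) (e : ℕ → ℕ) (k j : ℕ) : ℝ :=
  rowSum f (k + j + 1) (e (k + j + 1)) * ∏ t ∈ Ioc k (k + j), f t (e t)

/-- The value of the ordinary expansion with digits `e (k + 1), e (k + 2), …`. -/
def tailValue (f : ℕ → ℕ → ℝ) (e : ℕ → ℕ) (k : ℕ) : ℝ := ∑' j, tailTerm f e k j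

lemma negaShift_eq_tailValue (m : ℕ → ℕ) (f : ℕ → ℕ → ℝ) (d : ℕ → ℕ) (k : ℕ) :
    negaShift m f d k = tailValue f (twistDigits m d) k := by
  simp only [negaShift, tailValue, tailTerm, tw_apply, Icc_add_one_left_eq_Ioc]

lemma negaVal_eq_tailValue (m : ℕ → ℕ) (f : ℕ → ℕ → ℝ) (d : ℕ → ℕ) :
    negaVal m f d = tailValue f (twistDigits m d) 0 :=
  negaShift_eq_tailValue m f d 0

lemma rowSum_succ (f : ℕ → ℕ → ℝ) (n k : ℕ) : rowSum f n (k + 1) = rowSum f n k + f n k :=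
  sum_range_succ _ _

lemma tailTerm_zero (f : ℕ → ℕ → ℝ) (e : ℕ → ℕ) (k : ℕ) :
    tailTerm f e k 0 = rowSum f (k + 1) (e (k + 1)) := by
  simp [tailTerm]

lemma tailTerm_succ (f : ℕ → ℕ → ℝ) (e : ℕ → ℕ) (k j : ℕ) :
    tailTerm f e k (j + 1) = f (k + 1) (e (k + 1)) * tailTerm f e (k + 1) j := by
  have hIoc : Ioc k (k + (j + 1)) = insert (k + 1) (Ioc (k + 1) (k + 1 + j)) := by
    ext t; simp only [mem_Ioc, mem_insert]; omega
  rw [tailTerm, tailTerm, hIoc, prod_insert (by simp),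
    show k + (j + 1) + 1 = k + 1 + j + 1 by omega]
  ring

lemma sum_range_succ_tailTerm (f : ℕ → ℕ → ℝ) (e : ℕ → ℕ) (k N : ℕ) :
    ∑ j ∈ range (N + 1), tailTerm f e k j =
      rowSum f (k + 1) (e (k + 1)) +
        f (k + 1) (e (k + 1)) * ∑ j ∈ range N, tailTerm f e (k + 1) j := by
  simp only [sum_range_succ', tailTerm_succ, ← mul_sum, tailTerm_zero]
  ring

lemma tailValue_eq_zero_of_forall_eq_zero {f : ℕ → ℕ → ℝ} {e : ℕ → ℕ} {k : ℕ}
    (h : ∀ t, k < t → e t = 0) : tailValue f e k = 0 := by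
  refine (tsum_congr fun j => ?_).trans tsum_zero
  simp [tailTerm, h (k + j + 1) (by omega), rowSum]

lemma tailValue_congr {f : ℕ → ℕ → ℝ} {e e' : ℕ → ℕ} {k : ℕ} (h : ∀ t, k < t → e t = e' t) :
    tailValue f e k = tailValue f e' k := by
  refine tsum_congr fun j => ?_
  rw [tailTerm, tailTerm, h (k + j + 1) (by omega),
    prod_congr rfl fun t ht => by rw [h t (mem_Ioc.1 ht).1]]

structure IsStochastic (m : ℕ → ℕ) (f : ℕ → ℕ → ℝ) : Prop where
  nonneg : ∀ n i, i ≤ m n → 0 ≤ f n i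
  rowSum_eq_one : ∀ n, rowSum f n (m n + 1) = 1

/-- After a common block on `(k, n]`, `e` continues `a, m, m, …` and `e'` continues
`a + 1, 0, 0, …`: the two expansions of an endpoint of a cylinder. -/
def AdjacentDigits (m : ℕ → ℕ) (k n : ℕ) (e e' : ℕ → ℕ) : Prop :=
  (∀ t ∈ Ioc k n, e t = e' t) ∧ e' (n + 1) = e (n + 1) + 1 ∧
    (∀ t, n + 1 < t → e t = m t) ∧ ∀ t, n + 1 < t → e' t = 0

namespace IsStochastic

variable {m : ℕ → ℕ} {f : ℕ → ℕ → ℝ} (hf : IsStochastic m f) {e e' : ℕ → ℕ}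
include hf

lemma rowSum_mono {n k k' : ℕ} (h : k ≤ k') (hk' : k' ≤ m n + 1) :
    rowSum f n k ≤ rowSum f n k' :=
  sum_le_sum_of_subset_of_nonneg (range_subset_range.2 h) fun i hi _ =>
    hf.nonneg n i (by have := mem_range.1 hi; omega)

lemma rowSum_nonneg {n k : ℕ} (hk : k ≤ m n + 1) : 0 ≤ rowSum f n k :=
  hf.rowSum_mono (Nat.zero_le k) hk

lemma rowSum_le_one {n k : ℕ} (hk : k ≤ m n + 1) : rowSum f n k ≤ 1 :=
  (hf.rowSum_mono hk le_rfl).trans (hf.rowSum_eq_one n).le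

lemma tailTerm_nonneg (he : ValidDigits m e) (k j : ℕ) : 0 ≤ tailTerm f e k j :=
  mul_nonneg (hf.rowSum_nonneg (by have := he (k + j + 1); omega))
    (prod_nonneg fun t _ => hf.nonneg t _ (he t))

lemma sum_range_tailTerm_le_one (he : ValidDigits m e) (N : ℕ) :
    ∀ k, ∑ j ∈ range N, tailTerm f e k j ≤ 1 := by
  induction N with
  | zero => simp
  | succ N ih =>
    intro k
    have hdigit := hf.nonneg (k + 1) _ (he (k + 1))
    calc ∑ j ∈ range (N + 1), tailTerm f e k j
        ≤ rowSum f (k + 1) (e (k + 1)) + f (k + 1) (e (k + 1)) * 1 := by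
          rw [sum_range_succ_tailTerm]; gcongr; exact ih (k + 1)
      _ = rowSum f (k + 1) (e (k + 1) + 1) := by rw [rowSum_succ, mul_one]
      _ ≤ 1 := hf.rowSum_le_one (by have := he (k + 1); omega)

lemma summable_tailTerm (he : ValidDigits m e) (k : ℕ) : Summable (tailTerm f e k) :=
  summable_of_sum_range_le (hf.tailTerm_nonneg he k) fun N => hf.sum_range_tailTerm_le_one he N k

lemma tailValue_mem_Icc (he : ValidDigits m e) (k : ℕ) : tailValue f e k ∈ Set.Icc 0 1 :=
  ⟨tsum_nonneg (hf.tailTerm_nonneg he k),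
    (hf.summable_tailTerm he k).tsum_le_of_sum_range_le fun N =>
      hf.sum_range_tailTerm_le_one he N k⟩

lemma tailValue_eq (he : ValidDigits m e) (k : ℕ) :
    tailValue f e k =
      rowSum f (k + 1) (e (k + 1)) + f (k + 1) (e (k + 1)) * tailValue f e (k + 1) := by
  rw [tailValue, (hf.summable_tailTerm he k).tsum_eq_zero_add, tailTerm_zero]
  simp only [tailTerm_succ, tsum_mul_left, tailValue]

lemma rowSum_le_tailValue (he : ValidDigits m e) (k : ℕ) :
    rowSum f (k + 1) (e (k + 1)) ≤ tailValue f e k := by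
  rw [hf.tailValue_eq he k]
  have := hf.nonneg (k + 1) _ (he (k + 1))
  have := (hf.tailValue_mem_Icc he (k + 1)).1
  nlinarith

lemma tailValue_le_rowSum_succ (he : ValidDigits m e) (k : ℕ) :
    tailValue f e k ≤ rowSum f (k + 1) (e (k + 1) + 1) := by
  rw [hf.tailValue_eq he k, rowSum_succ]
  have := hf.nonneg (k + 1) _ (he (k + 1))
  have := (hf.tailValue_mem_Icc he (k + 1)).2
  nlinarith

lemma sub_tailValue_eq_prod_mul (he : ValidDigits m e) {r : ℕ → ℝ} {k n : ℕ} (hkn : k ≤ n)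
    (hr : ∀ t, k ≤ t → t < n →
      r t = rowSum f (t + 1) (e (t + 1)) + f (t + 1) (e (t + 1)) * r (t + 1)) :
    r k - tailValue f e k = (∏ t ∈ Ioc k n, f t (e t)) * (r n - tailValue f e n) := by
  induction n, hkn using Nat.le_induction with
  | base => simp
  | succ n hkn ih =>
    rw [ih fun t hkt htn => hr t hkt (by omega), prod_Ioc_succ_top hkn, hr n hkn (by omega),
      hf.tailValue_eq he n]
    ring

lemma tailValue_sub_tailValue_eq_prod_mul (he : ValidDigits m e) (he' : ValidDigits m e')
    {k n : ℕ} (hkn : k ≤ n) (hagree : ∀ t ∈ Ioc k n, e t = e' t) :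
    tailValue f e' k - tailValue f e k =
      (∏ t ∈ Ioc k n, f t (e t)) * (tailValue f e' n - tailValue f e n) :=
  hf.sub_tailValue_eq_prod_mul he hkn fun t hkt htn => by
    rw [hf.tailValue_eq he' t, hagree (t + 1) (mem_Ioc.2 ⟨by omega, by omega⟩)]

lemma eq_tailValue_of_recursion (he : ValidDigits m e) {r : ℕ → ℝ} {k : ℕ}
    (hr01 : ∀ t, r t ∈ Set.Icc (0 : ℝ) 1)
    (hr : ∀ t, k ≤ t → r t = rowSum f (t + 1) (e (t + 1)) + f (t + 1) (e (t + 1)) * r (t + 1))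
    (hvanish : Tendsto (fun N => ∏ t ∈ Ioc k N, f t (e t)) atTop (𝓝 0)) :
    r k = tailValue f e k := by
  have hbound : ∀ N, ‖(∏ t ∈ Ioc k N, f t (e t)) * (r N - tailValue f e N)‖ ≤
      ∏ t ∈ Ioc k N, f t (e t) := fun N => by
    have hprod : 0 ≤ ∏ t ∈ Ioc k N, f t (e t) := prod_nonneg fun t _ => hf.nonneg t _ (he t)
    have h1 := hr01 N
    have h2 := hf.tailValue_mem_Icc he N
    rw [Real.norm_eq_abs, abs_mul, abs_of_nonneg hprod]
    exact mul_le_of_le_one_right hprod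
      (abs_le.2 ⟨by linarith [h1.1, h2.2], by linarith [h1.2, h2.1]⟩)
  have hlim := squeeze_zero_norm hbound hvanish
  have hconst : (fun N => (∏ t ∈ Ioc k N, f t (e t)) * (r N - tailValue f e N)) =ᶠ[atTop]
      fun _ => r k - tailValue f e k :=
    eventually_atTop.2 ⟨k, fun N hN =>
      (hf.sub_tailValue_eq_prod_mul he hN fun t hkt _ => hr t hkt).symm⟩
  exact sub_eq_zero.1 (tendsto_nhds_unique (tendsto_const_nhds.congr' hconst.symm) hlim)

lemma tailValue_le_tailValue (he : ValidDigits m e) (he' : ValidDigits m e') {k n : ℕ}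
    (hkn : k ≤ n) (hagree : ∀ t ∈ Ioc k n, e t = e' t) (hlt : e (n + 1) < e' (n + 1)) :
    tailValue f e k ≤ tailValue f e' k := by
  have hstep : tailValue f e n ≤ tailValue f e' n :=
    calc tailValue f e n ≤ rowSum f (n + 1) (e (n + 1) + 1) := hf.tailValue_le_rowSum_succ he n
      _ ≤ rowSum f (n + 1) (e' (n + 1)) := hf.rowSum_mono hlt (by have := he' (n + 1); omega)
      _ ≤ tailValue f e' n := hf.rowSum_le_tailValue he' n
  have hprod : 0 ≤ ∏ t ∈ Ioc k n, f t (e t) := prod_nonneg fun t _ => hf.nonneg t _ (he t)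
  have := hf.tailValue_sub_tailValue_eq_prod_mul he he' hkn hagree
  nlinarith

lemma tailValue_eq_of_adjacentDigits (he : ValidDigits m e) (he' : ValidDigits m e') {k n : ℕ}
    (hkn : k ≤ n) (hadj : AdjacentDigits m k n e e')
    (hvanish : Tendsto (fun N => ∏ t ∈ Ioc k N, f t (e t)) atTop (𝓝 0)) :
    tailValue f e k = tailValue f e' k := by
  obtain ⟨hagree, hcarry, hmax, hzero⟩ := hadj
  -- `r` solves the recursion of `e`: at `n` the carry trades the zero tail of `e'` for the
  -- all-`m` tail of `e`, whose value is `1`.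
  set r : ℕ → ℝ := fun t => if t ≤ n then tailValue f e' t else 1 with hr_def
  have hr01 : ∀ t, r t ∈ Set.Icc (0 : ℝ) 1 := fun t => by
    by_cases ht : t ≤ n
    · simpa [hr_def, ht] using hf.tailValue_mem_Icc he' t
    · simp [hr_def, ht]
  have hrec : ∀ t, k ≤ t →
      r t = rowSum f (t + 1) (e (t + 1)) + f (t + 1) (e (t + 1)) * r (t + 1) := by
    intro t hkt
    rcases lt_trichotomy t n with htn | rfl | hnt
    · simp only [hr_def, if_pos htn.le, if_pos (Nat.succ_le_of_lt htn),
        hagree (t + 1) (mem_Ioc.2 ⟨by omega, htn⟩)]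
      exact hf.tailValue_eq he' t
    · simp only [hr_def, le_refl, if_true, show ¬t + 1 ≤ t by omega, if_false, mul_one]
      rw [hf.tailValue_eq he' t, tailValue_eq_zero_of_forall_eq_zero hzero, hcarry, rowSum_succ,
        mul_zero, add_zero]
    · simp only [hr_def, if_neg (show ¬t ≤ n by omega), if_neg (show ¬t + 1 ≤ n by omega), mul_one,
        hmax (t + 1) (by omega), ← rowSum_succ, hf.rowSum_eq_one]
  simpa [hr_def, hkn] using (hf.eq_tailValue_of_recursion he hr01 hrec hvanish).symm

section PositiveRows

variable (hpos : ∀ n i, i ≤ m n → 0 < f n i)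
include hpos

lemma rowSum_lt_rowSum {n k k' : ℕ} (h : k < k') (hk' : k' ≤ m n + 1) :
    rowSum f n k < rowSum f n k' :=
  calc rowSum f n k < rowSum f n k + f n k := lt_add_of_pos_right _ (hpos n k (by omega))
    _ = rowSum f n (k + 1) := (rowSum_succ f n k).symm
    _ ≤ rowSum f n k' := hf.rowSum_mono h hk'

lemma digit_eq_and_tailValue_succ_eq_one (he : ValidDigits m e) {k : ℕ}
    (h : tailValue f e k = 1) : e (k + 1) = m (k + 1) ∧ tailValue f e (k + 1) = 1 := by
  have hle := hf.tailValue_le_rowSum_succ he k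
  have hrec := hf.tailValue_eq he k
  have hsucc : rowSum f (k + 1) (e (k + 1) + 1) ≤ 1 :=
    hf.rowSum_le_one (by have := he (k + 1); omega)
  have hT := (hf.tailValue_mem_Icc he (k + 1)).2
  have ha := hpos (k + 1) _ (he (k + 1))
  rw [rowSum_succ] at hle hsucc
  refine ⟨?_, by nlinarith⟩
  by_contra hne
  have hlt := hf.rowSum_lt_rowSum hpos (n := k + 1) (k := e (k + 1) + 1) (k' := m (k + 1) + 1)
    (by have := he (k + 1); omega) le_rfl
  rw [hf.rowSum_eq_one, rowSum_succ] at hlt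
  linarith

lemma digit_eq_and_tailValue_succ_eq_zero (he : ValidDigits m e) {k : ℕ}
    (h : tailValue f e k = 0) : e (k + 1) = 0 ∧ tailValue f e (k + 1) = 0 := by
  have hle := hf.rowSum_le_tailValue he k
  have hrec := hf.tailValue_eq he k
  have hT := (hf.tailValue_mem_Icc he (k + 1)).1
  have ha := hpos (k + 1) _ (he (k + 1))
  have hdigit : e (k + 1) = 0 := by
    by_contra hne
    have hlt := hf.rowSum_lt_rowSum hpos (n := k + 1) (k := 0) (k' := e (k + 1))
      (Nat.pos_of_ne_zero hne) (by have := he (k + 1); omega)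
    rw [rowSum, sum_range_zero] at hlt
    linarith
  have hβ : rowSum f (k + 1) (e (k + 1)) = 0 := by simp [hdigit, rowSum]
  exact ⟨hdigit, by nlinarith⟩

lemma eq_of_tailValue_eq_one (he : ValidDigits m e) {k : ℕ} (h : tailValue f e k = 1) :
    ∀ t, k < t → e t = m t := by
  have hone : ∀ t, k ≤ t → tailValue f e t = 1 := fun t hkt => by
    induction t, hkt using Nat.le_induction with
    | base => exact h
    | succ t _ ih => exact (hf.digit_eq_and_tailValue_succ_eq_one hpos he ih).2
  intro t hkt
  obtain ⟨s, rfl⟩ : ∃ s, t = s + 1 := ⟨t - 1, by omega⟩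
  exact (hf.digit_eq_and_tailValue_succ_eq_one hpos he (hone s (by omega))).1

lemma eq_zero_of_tailValue_eq_zero (he : ValidDigits m e) {k : ℕ} (h : tailValue f e k = 0) :
    ∀ t, k < t → e t = 0 := by
  have hzero : ∀ t, k ≤ t → tailValue f e t = 0 := fun t hkt => by
    induction t, hkt using Nat.le_induction with
    | base => exact h
    | succ t _ ih => exact (hf.digit_eq_and_tailValue_succ_eq_zero hpos he ih).2
  intro t hkt
  obtain ⟨s, rfl⟩ : ∃ s, t = s + 1 := ⟨t - 1, by omega⟩
  exact (hf.digit_eq_and_tailValue_succ_eq_zero hpos he (hzero s (by omega))).1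

/-- With positive rows, the chain `tailValue f e n ≤ β_{a+1} ≤ β_b ≤ tailValue f e' n`
(where `a < b` are the digits at `n + 1`) is strict unless it is a carry. -/
lemma carry_of_tailValue_eq (he : ValidDigits m e) (he' : ValidDigits m e') {n : ℕ}
    (hlt : e (n + 1) < e' (n + 1)) (heq : tailValue f e n = tailValue f e' n) :
    e' (n + 1) = e (n + 1) + 1 ∧ tailValue f e (n + 1) = 1 ∧ tailValue f e' (n + 1) = 0 := by
  have h1 := hf.tailValue_le_rowSum_succ he n
  have h2 := hf.rowSum_mono (n := n + 1) hlt (by have := he' (n + 1); omega)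
  have h3 := hf.rowSum_le_tailValue he' n
  have hrec := hf.tailValue_eq he n
  have hrec' := hf.tailValue_eq he' n
  have hT := (hf.tailValue_mem_Icc he (n + 1)).2
  have hT' := (hf.tailValue_mem_Icc he' (n + 1)).1
  have ha := hpos (n + 1) _ (he (n + 1))
  have hb := hpos (n + 1) _ (he' (n + 1))
  rw [rowSum_succ] at h1 h2
  refine ⟨?_, by nlinarith, by nlinarith⟩
  by_contra hne
  have := hf.rowSum_lt_rowSum hpos (n := n + 1) (show e (n + 1) + 1 < e' (n + 1) by omega)
    (by have := he' (n + 1); omega)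
  rw [rowSum_succ] at this
  linarith

lemma adjacentDigits_of_tailValue_eq (he : ValidDigits m e) (he' : ValidDigits m e') {k n : ℕ}
    (hkn : k ≤ n) (hagree : ∀ t ∈ Ioc k n, e t = e' t) (hlt : e (n + 1) < e' (n + 1))
    (heq : tailValue f e k = tailValue f e' k) : AdjacentDigits m k n e e' := by
  have hprod : 0 < ∏ t ∈ Ioc k n, f t (e t) := prod_pos fun t _ => hpos t _ (he t)
  have hdiff := hf.tailValue_sub_tailValue_eq_prod_mul he he' hkn hagree
  rw [heq, sub_self, eq_comm, mul_eq_zero_iff_left hprod.ne', sub_eq_zero] at hdiff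
  obtain ⟨hcarry, hone, hzero⟩ := hf.carry_of_tailValue_eq hpos he he' hlt hdiff.symm
  exact ⟨hagree, hcarry, fun t ht => hf.eq_of_tailValue_eq_one hpos he hone t ht,
    fun t ht => hf.eq_zero_of_tailValue_eq_zero hpos he' hzero t ht⟩

end PositiveRows

end IsStochastic

lemma exists_first_ne {e e' : ℕ → ℕ} {k : ℕ} (h : ¬∀ t, k < t → e t = e' t) :
    ∃ n, k ≤ n ∧ (∀ t ∈ Ioc k n, e t = e' t) ∧ e (n + 1) ≠ e' (n + 1) := by
  push Not at h
  obtain ⟨t, hkt, hne⟩ := h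
  have hex : ∃ n, k ≤ n ∧ e (n + 1) ≠ e' (n + 1) :=
    ⟨t - 1, by omega, by rwa [Nat.sub_add_cancel (by omega)]⟩
  obtain ⟨hkn, hne⟩ := Nat.find_spec hex
  refine ⟨Nat.find hex, hkn, fun s hs => ?_, hne⟩
  obtain ⟨hks, hsn⟩ := mem_Ioc.1 hs
  by_contra hs'
  exact Nat.find_min hex (show s - 1 < Nat.find hex by omega)
    ⟨by omega, by rwa [Nat.sub_add_cancel (by omega)]⟩

/-- Positivity of `q` makes the lexicographic order of digits strict on `q`-values except at
adjacent expansions, which `p` identifies as well. -/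
theorem tailValue_le_of_tailValue_le {m : ℕ → ℕ} {q p : ℕ → ℕ → ℝ} (hq : IsStochastic m q)
    (hqpos : ∀ n i, i ≤ m n → 0 < q n i) (hp : IsStochastic m p) {k : ℕ}
    (hvanish : ∀ d, ValidDigits m d → Tendsto (fun N => ∏ t ∈ Ioc k N, p t (d t)) atTop (𝓝 0))
    {e e' : ℕ → ℕ} (he : ValidDigits m e) (he' : ValidDigits m e')
    (h : tailValue q e k ≤ tailValue q e' k) : tailValue p e k ≤ tailValue p e' k := by
  by_cases hsame : ∀ t, k < t → e t = e' t
  · exact (tailValue_congr hsame).le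
  obtain ⟨n, hkn, hagree, hne⟩ := exists_first_ne hsame
  rcases Nat.lt_or_gt_of_ne hne with hlt | hgt
  · exact hp.tailValue_le_tailValue he he' hkn hagree hlt
  have hagree' : ∀ t ∈ Ioc k n, e' t = e t := fun t ht => (hagree t ht).symm
  have heq := le_antisymm (hq.tailValue_le_tailValue he' he hkn hagree' hgt) h
  have hadj := hq.adjacentDigits_of_tailValue_eq hqpos he' he hkn hagree' hgt heq
  exact (hp.tailValue_eq_of_adjacentDigits he' he hkn hadj (hvanish e' he')).ge

def greedyDigit (m : ℕ → ℕ) (f : ℕ → ℕ → ℝ) (n : ℕ) (r : ℝ) : ℕ :=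
  Nat.findGreatest (fun i => rowSum f n i ≤ r) (m n)

/-- When the chosen entry `f n i` vanishes, the greedy choice forces `r = rowSum f n i`, so the
junk value `x / 0 = 0` is a valid remainder. -/
def greedyRem (m : ℕ → ℕ) (f : ℕ → ℕ → ℝ) (y : ℝ) : ℕ → ℝ
  | 0 => y
  | n + 1 =>
    let r := greedyRem m f y n
    (r - rowSum f (n + 1) (greedyDigit m f (n + 1) r)) / f (n + 1) (greedyDigit m f (n + 1) r)

def greedyDigits (m : ℕ → ℕ) (f : ℕ → ℕ → ℝ) (y : ℝ) : ℕ → ℕ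
  | 0 => 0
  | n + 1 => greedyDigit m f (n + 1) (greedyRem m f y n)

lemma greedyDigits_valid (m : ℕ → ℕ) (f : ℕ → ℕ → ℝ) (y : ℝ) :
    ValidDigits m (greedyDigits m f y)
  | 0 => Nat.zero_le _
  | _ + 1 => Nat.findGreatest_le _

namespace IsStochastic

variable {m : ℕ → ℕ} {f : ℕ → ℕ → ℝ} (hf : IsStochastic m f) {y : ℝ}
include hf

lemma greedyDigit_spec {n : ℕ} {r : ℝ} (hr : r ∈ Set.Icc (0 : ℝ) 1) :
    rowSum f n (greedyDigit m f n r) ≤ r ∧ r ≤ rowSum f n (greedyDigit m f n r + 1) := by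
  have hle : greedyDigit m f n r ≤ m n := Nat.findGreatest_le _
  refine ⟨Nat.findGreatest_spec (P := fun i => rowSum f n i ≤ r) (Nat.zero_le _)
    (by simpa [rowSum] using hr.1), ?_⟩
  rcases hle.eq_or_lt with heq | hlt
  · rw [heq, hf.rowSum_eq_one]; exact hr.2
  · exact (not_le.1 (Nat.findGreatest_is_greatest (P := fun i => rowSum f n i ≤ r)
      (Nat.lt_succ_self _) hlt)).le

lemma greedyRem_succ {n : ℕ} (hr : greedyRem m f y n ∈ Set.Icc (0 : ℝ) 1) :
    greedyRem m f y (n + 1) ∈ Set.Icc (0 : ℝ) 1 ∧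
      greedyRem m f y n = rowSum f (n + 1) (greedyDigits m f y (n + 1)) +
        f (n + 1) (greedyDigits m f y (n + 1)) * greedyRem m f y (n + 1) := by
  obtain ⟨hlow, hhigh⟩ := hf.greedyDigit_spec (n := n + 1) hr
  simp only [greedyRem, greedyDigits]
  set r := greedyRem m f y n
  set i := greedyDigit m f (n + 1) r
  rw [rowSum_succ] at hhigh
  rcases (hf.nonneg (n + 1) i (Nat.findGreatest_le _)).eq_or_lt with hzero | hpos
  · rw [← hzero, div_zero, zero_mul]
    exact ⟨⟨le_rfl, zero_le_one⟩, by linarith⟩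
  · refine ⟨⟨div_nonneg (by linarith) hpos.le, (div_le_one hpos).2 (by linarith)⟩, ?_⟩
    rw [mul_div_cancel₀ _ hpos.ne']
    ring

lemma greedyRem_mem_Icc (hy : y ∈ Set.Icc (0 : ℝ) 1) :
    ∀ n, greedyRem m f y n ∈ Set.Icc (0 : ℝ) 1 := by
  intro n
  induction n with
  | zero => exact hy
  | succ n ih => exact (hf.greedyRem_succ ih).1

lemma tailValue_greedyDigits (hy : y ∈ Set.Icc (0 : ℝ) 1)
    (hvanish : Tendsto (fun N => ∏ t ∈ Ioc 0 N, f t (greedyDigits m f y t)) atTop (𝓝 0)) :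
    tailValue f (greedyDigits m f y) 0 = y :=
  (hf.eq_tailValue_of_recursion (greedyDigits_valid m f y) (hf.greedyRem_mem_Icc hy)
    (fun t _ => (hf.greedyRem_succ (hf.greedyRem_mem_Icc hy t)).2) hvanish).symm

end IsStochastic

section MonotoneOnIcc

open Set

variable {α β : Type*} [LinearOrder α] [LinearOrder β] {g : α → β} {a b : α} {c d : β}

lemma MonotoneOn.apply_left_eq_of_surjOn (hg : MonotoneOn g (Icc a b))
    (hmaps : MapsTo g (Icc a b) (Icc c d)) (hsurj : SurjOn g (Icc a b) (Icc c d)) (hab : a ≤ b)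
    (hcd : c ≤ d) : g a = c := by
  obtain ⟨x, hx, hgx⟩ := hsurj (left_mem_Icc.2 hcd)
  exact le_antisymm (hgx ▸ hg (left_mem_Icc.2 hab) hx hx.1) (hmaps (left_mem_Icc.2 hab)).1

lemma MonotoneOn.apply_right_eq_of_surjOn (hg : MonotoneOn g (Icc a b))
    (hmaps : MapsTo g (Icc a b) (Icc c d)) (hsurj : SurjOn g (Icc a b) (Icc c d)) (hab : a ≤ b)
    (hcd : c ≤ d) : g b = d := by
  obtain ⟨x, hx, hgx⟩ := hsurj (right_mem_Icc.2 hcd)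
  exact le_antisymm (hmaps (right_mem_Icc.2 hab)).2 (hgx ▸ hg hx (right_mem_Icc.2 hab) hx.2)

lemma MonotoneOn.continuousOn_of_surjOn_Icc [TopologicalSpace α] [OrderTopology α]
    [TopologicalSpace β] [OrderTopology β] [DenselyOrdered β] (hg : MonotoneOn g (Icc a b))
    (hmaps : MapsTo g (Icc a b) (Icc c d)) (hsurj : SurjOn g (Icc a b) (Icc c d)) :
    ContinuousOn g (Icc a b) := by
  have hcont : Continuous hmaps.restrict :=
    Monotone.continuous_of_surjective (fun x y hxy => hg x.2 y.2 hxy)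
      (hmaps.restrict_surjective_iff.2 hsurj)
  exact continuousOn_iff_continuous_domRestrict.2 (continuous_subtype_val.comp hcont)

end MonotoneOnIcc

theorem stmt10_general (m : ℕ → ℕ) (q p : ℕ → ℕ → ℝ)
    (hq1 : ∀ n i, i ≤ m n → 0 < q n i)
    (hq2 : ∀ n, ∑ i ∈ Finset.range (m n + 1), q n i = 1)
    (hp0 : ∀ n i, i ≤ m n → 0 ≤ p n i)
    (hp2 : ∀ n, ∑ i ∈ Finset.range (m n + 1), p n i = 1)
    (hp4 : ∀ d, ValidDigits m d →
      Tendsto (fun N => ∏ j ∈ Finset.Icc 1 N, p j (d j)) atTop (𝓝 0))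
    (G : ℝ → ℝ)
    (hG : ∀ d, ValidDigits m d → G (negaVal m q d) = negaVal m p d)
    (hsurj : ∀ x ∈ Set.Icc (0 : ℝ) 1, ∃ d, ValidDigits m d ∧ x = negaVal m q d) :
    G 0 = 0 ∧ G 1 = 1 ∧ MonotoneOn G (Set.Icc (0 : ℝ) 1) ∧
      ContinuousOn G (Set.Icc (0 : ℝ) 1) := by
  have hq : IsStochastic m q := ⟨fun n i hi => (hq1 n i hi).le, hq2⟩
  have hp : IsStochastic m p := ⟨hp0, hp2⟩
  have hvanish : ∀ d, ValidDigits m d →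
      Tendsto (fun N => ∏ t ∈ Ioc 0 N, p t (d t)) atTop (𝓝 0) := fun d hd => by
    simpa only [← Icc_add_one_left_eq_Ioc, zero_add] using hp4 d hd
  have hrep : ∀ x ∈ Set.Icc (0 : ℝ) 1,
      ∃ e, ValidDigits m e ∧ x = tailValue q e 0 ∧ G x = tailValue p e 0 := by
    intro x hx
    obtain ⟨d, hd, rfl⟩ := hsurj x hx
    exact ⟨twistDigits m d, twistDigits_valid hd, negaVal_eq_tailValue m q d,
      by rw [hG d hd, negaVal_eq_tailValue]⟩
  have hmono : MonotoneOn G (Set.Icc (0 : ℝ) 1) := by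
    intro x hx y hy hxy
    obtain ⟨e, he, rfl, hGx⟩ := hrep x hx
    obtain ⟨e', he', rfl, hGy⟩ := hrep y hy
    rw [hGx, hGy]
    exact tailValue_le_of_tailValue_le hq hq1 hp hvanish he he' hxy
  have hmaps : Set.MapsTo G (Set.Icc 0 1) (Set.Icc 0 1) := fun x hx => by
    obtain ⟨e, he, -, hGx⟩ := hrep x hx
    exact hGx ▸ hp.tailValue_mem_Icc he 0
  have hsurjG : Set.SurjOn G (Set.Icc 0 1) (Set.Icc 0 1) := fun y hy => by
    have he := greedyDigits_valid m p y
    refine ⟨negaVal m q (twistDigits m (greedyDigits m p y)), ?_, ?_⟩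
    · rw [negaVal_eq_tailValue, twistDigits_twistDigits he]
      exact hq.tailValue_mem_Icc he 0
    · rw [hG _ (twistDigits_valid he), negaVal_eq_tailValue, twistDigits_twistDigits he]
      exact hp.tailValue_greedyDigits hy (hvanish _ he)
  exact ⟨hmono.apply_left_eq_of_surjOn hmaps hsurjG zero_le_one zero_le_one,
    hmono.apply_right_eq_of_surjOn hmaps hsurjG zero_le_one zero_le_one, hmono,
    hmono.continuousOn_of_surjOn_Icc hmaps hsurjG⟩

/-- if all entries of `P` are nonnegative, then `F(0)=0`, `F(1)=1`, and `F`
is nondecreasing and continuous on `[0,1]`, i.e. a continuous distribution function. -/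
theorem stmt10 (m : ℕ → ℕ) (q p : ℕ → ℕ → ℝ)
    (hq1 : ∀ n i, i ≤ m n → 0 < q n i)
    (hq2 : ∀ n, ∑ i ∈ Finset.range (m n + 1), q n i = 1)
    (hq4 : ∀ d, ValidDigits m d →
      Tendsto (fun N => ∏ j ∈ Finset.Icc 1 N, q j (d j)) atTop (𝓝 0))
    (hp0 : ∀ n i, i ≤ m n → 0 ≤ p n i)
    (hp1 : ∀ n i, i ≤ m n → p n i < 1)
    (hp2 : ∀ n, ∑ i ∈ Finset.range (m n + 1), p n i = 1)
    (hp3 : ∀ n k, 1 ≤ k → k ≤ m n → rowSum p n k ∈ Set.Ioo (0 : ℝ) 1)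
    (hp4 : ∀ d, ValidDigits m d →
      Tendsto (fun N => ∏ j ∈ Finset.Icc 1 N, p j (d j)) atTop (𝓝 0))
    (G : ℝ → ℝ)
    (hG : ∀ d, ValidDigits m d → G (negaVal m q d) = negaVal m p d)
    (hsurj : ∀ x ∈ Set.Icc (0 : ℝ) 1, ∃ d, ValidDigits m d ∧ x = negaVal m q d) :
    G 0 = 0 ∧ G 1 = 1 ∧ MonotoneOn G (Set.Icc (0 : ℝ) 1) ∧
      ContinuousOn G (Set.Icc (0 : ℝ) 1) :=
  stmt10_general m q p hq1 hq2 hp0 hp2 hp4 G hG hsurj
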